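/- arXiv:2403.07735 — 4 statements merged into one kernel-verified Lean document; each statement's English description precedes it below -/
import Mathlib

section
/- For two multivariate Gaussians P = N(m₁, Σ₁) and Q = N(m₂, Σ₂) on ℝ^d and the Gaussian kernel k(x,y) = exp(−(γ/2)‖x−y‖²) with γ > 0, the inner product of kernel mean embeddings satisfies ⟨μ_k(P), μ_k(Q)⟩ = exp(−(1/2)(m₁−m₂)ᵀ(Σ₁+Σ₂+γ⁻¹I_d)⁻¹(m₁−m₂)) / det(γΣ₁+γΣ₂+I_d)^{1/2}. -/
open MeasureTheory Matrix

/-- Density of the multivariate normal `N(μ, Σ)` on `ℝ^d`. -/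
noncomputable def gaussianPdf {ι : Type*} [Fintype ι] [DecidableEq ι]
    (μ : ι → ℝ) (S : Matrix ι ι ℝ) (x : ι → ℝ) : ℝ :=
  (2 * Real.pi) ^ (-(Fintype.card ι : ℝ) / 2) * S.det ^ (-(1 : ℝ) / 2) *
    Real.exp (-(1 / 2) * ((x - μ) ⬝ᵥ S⁻¹.mulVec (x - μ)))

/-- The multivariate normal distribution `N(μ, Σ)`, via its Lebesgue density. -/
noncomputable def gaussianMeasure {ι : Type*} [Fintype ι] [DecidableEq ι]
    (μ : ι → ℝ) (S : Matrix ι ι ℝ) : Measure (ι → ℝ) :=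
  volume.withDensity (fun x => ENNReal.ofReal (gaussianPdf μ S x))

namespace GaussAux

open Real
open scoped ENNReal NNReal

variable {d : ℕ}

lemma sqrt_pow' (a : ℝ) (n : ℕ) (ha : 0 ≤ a) : Real.sqrt a ^ n = Real.sqrt (a ^ n) := by
  induction n with
  | zero => simp
  | succ k ih => rw [pow_succ, pow_succ, ih, ← Real.sqrt_mul (by positivity) a]

lemma rpow_neg_half (z : ℝ) (hz : 0 < z) : z ^ (-(1 : ℝ)/2) = 1 / Real.sqrt z := by
  rw [neg_div, Real.rpow_neg hz.le, Real.sqrt_eq_rpow]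
  exact (one_div _).symm

lemma dot_symm {M : Matrix (Fin d) (Fin d) ℝ} (hM : Mᵀ = M) (u v : Fin d → ℝ) :
    u ⬝ᵥ M.mulVec v = v ⬝ᵥ M.mulVec u := by
  rw [Matrix.dotProduct_mulVec, ← Matrix.mulVec_transpose, hM, dotProduct_comm]

lemma tr_eq {M : Matrix (Fin d) (Fin d) ℝ} (hM : M.IsHermitian) : Mᵀ = M := by
  exact (Matrix.conjTranspose_eq_transpose_of_trivial M).symm.trans hM

lemma neg_quad (M : Matrix (Fin d) (Fin d) ℝ) (u : Fin d → ℝ) :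
    (-u) ⬝ᵥ M.mulVec (-u) = u ⬝ᵥ M.mulVec u := by
  rw [Matrix.mulVec_neg, dotProduct_neg, neg_dotProduct, neg_neg]

lemma posDef_smul_one {γ : ℝ} (hγ : 0 < γ) : (γ • (1 : Matrix (Fin d) (Fin d) ℝ)).PosDef := by
  rw [Matrix.smul_one_eq_diagonal]
  exact Matrix.PosDef.diagonal fun _ => hγ

lemma inv_smul_one {γ : ℝ} (hγ : γ ≠ 0) : (γ • (1 : Matrix (Fin d) (Fin d) ℝ))⁻¹ = γ⁻¹ • 1 := by
  apply Matrix.inv_eq_right_inv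
  rw [Matrix.smul_mul, Matrix.mul_smul, one_mul, smul_smul, mul_inv_cancel₀ hγ, one_smul]

lemma integral_comp_toLin (S : Matrix (Fin d) (Fin d) ℝ) (hS : IsUnit S.det)
    (g : (Fin d → ℝ) → ℝ) :
    ∫ x, g x = |S.det| * ∫ x, g (S.mulVec x) := by
  have hinv : Invertible S := S.invertibleOfIsUnitDet hS
  let e : (Fin d → ℝ) ≃ₗ[ℝ] (Fin d → ℝ) := S.toLinearEquiv' hinv
  have hdet : LinearMap.det (e : (Fin d → ℝ) →ₗ[ℝ] (Fin d → ℝ)) = S.det := by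
    rw [Matrix.toLinearEquiv'_apply]
    exact LinearMap.det_toLin' S
  have hdet0 : LinearMap.det (e : (Fin d → ℝ) →ₗ[ℝ] (Fin d → ℝ)) ≠ 0 := by
    rw [hdet]; exact hS.ne_zero
  have hmap : Measure.map (e : (Fin d → ℝ) →ₗ[ℝ] (Fin d → ℝ)) volume
      = ENNReal.ofReal |(S.det)⁻¹| • volume := by
    rw [Measure.map_linearMap_addHaar_eq_smul_addHaar _ hdet0, hdet]
  have hme : MeasurableEmbedding (e : (Fin d → ℝ) → (Fin d → ℝ)) :=
    e.toContinuousLinearEquiv.toHomeomorph.measurableEmbedding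
  have h1 : ∫ y, g y ∂(Measure.map (e : (Fin d → ℝ) →ₗ[ℝ] (Fin d → ℝ)) volume)
      = ∫ x, g (e x) := hme.integral_map g
  rw [hmap, integral_smul_measure] at h1
  have happ : ∀ x, (e : (Fin d → ℝ) → (Fin d → ℝ)) x = S.mulVec x := fun x => by
    show Matrix.toLin' S x = S.mulVec x
    rw [Matrix.toLin'_apply]
  simp only [happ] at h1
  rw [ENNReal.toReal_ofReal (abs_nonneg _), abs_inv, smul_eq_mul] at h1
  have hne : |S.det| ≠ 0 := by simpa using hS.ne_zero
  rw [inv_mul_eq_div, div_eq_iff hne] at h1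
  rw [h1]; ring

open scoped MatrixOrder in
lemma gauss_int (A : Matrix (Fin d) (Fin d) ℝ) (hA : A.PosDef) :
    ∫ x : Fin d → ℝ, Real.exp (-(1/2) * (x ⬝ᵥ A.mulVec x))
      = Real.sqrt ((2 * π) ^ d / A.det) := by
  have hAdet : 0 < A.det := hA.det_pos
  have hAinv : A⁻¹.PosDef := hA.inv
  set S := CFC.sqrt A⁻¹ with hSdef
  have hSS : S * S = A⁻¹ := CFC.sqrt_mul_sqrt_self _ (Matrix.nonneg_iff_posSemidef.2 hAinv.posSemidef)
  have hSsd : S.PosSemidef := Matrix.nonneg_iff_posSemidef.1 (CFC.sqrt_nonneg _)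
  have hSt : Sᵀ = S := by
    have := hSsd.1
    exact tr_eq this
  have h0 : 0 ≤ S.det := by
    rw [hSsd.1.det_eq_prod_eigenvalues]
    exact Finset.prod_nonneg fun i _ => hSsd.eigenvalues_nonneg i
  have hdetS : S.det = Real.sqrt A⁻¹.det := by
    have h2 : S.det * S.det = A⁻¹.det := by rw [← Matrix.det_mul, hSS]
    rw [← h2, Real.sqrt_mul_self h0]
  have hdetAinv : A⁻¹.det = A.det⁻¹ := by
    rw [Matrix.det_nonsing_inv, Ring.inverse_eq_inv]
  have hdetS0 : IsUnit S.det := by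
    rw [hdetS, hdetAinv]
    exact isUnit_iff_ne_zero.2 (by positivity)
  have hq : ∀ x : Fin d → ℝ, (S.mulVec x) ⬝ᵥ A.mulVec (S.mulVec x) = x ⬝ᵥ x := by
    intro x
    have hSAS : S * (A * S) = 1 := by
      have hA' : A = S⁻¹ * S⁻¹ := by
        rw [← Matrix.mul_inv_rev, hSS,
          Matrix.nonsing_inv_nonsing_inv _ (isUnit_iff_ne_zero.2 hA.det_pos.ne')]
      rw [hA', Matrix.mul_assoc, Matrix.nonsing_inv_mul _ hdetS0,
        Matrix.mul_one, Matrix.mul_nonsing_inv _ hdetS0]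
    calc (S.mulVec x) ⬝ᵥ A.mulVec (S.mulVec x)
        = (S.mulVec x) ⬝ᵥ (A * S).mulVec x := by rw [Matrix.mulVec_mulVec]
      _ = x ⬝ᵥ (S * (A * S)).mulVec x := by
          nth_rewrite 1 [← hSt]
          rw [Matrix.mulVec_transpose, ← Matrix.dotProduct_mulVec, Matrix.mulVec_mulVec]
      _ = x ⬝ᵥ x := by rw [hSAS, Matrix.one_mulVec]
  rw [integral_comp_toLin S hdetS0]
  have : ∀ x : Fin d → ℝ, Real.exp (-(1/2) * ((S.mulVec x) ⬝ᵥ A.mulVec (S.mulVec x)))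
      = ∏ i, Real.exp (-(1/2) * (x i)^2) := by
    intro x
    rw [hq, ← Real.exp_sum]
    congr 1
    rw [dotProduct, Finset.mul_sum]
    exact Finset.sum_congr rfl fun i _ => by ring
  simp only [this]
  rw [MeasureTheory.integral_fintype_prod_volume_eq_pow (fun t => Real.exp (-(1/2) * t^2))]
  have h1d : ∫ t : ℝ, Real.exp (-(1/2) * t^2) = Real.sqrt (2 * π) := by
    have := integral_gaussian (1/2 : ℝ)
    simp only [neg_mul] at this ⊢
    rw [this]
    congr 1
    ring
  rw [Fintype.card_fin] at *
  rw [h1d, abs_of_nonneg h0, hdetS, hdetAinv,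
    sqrt_pow' _ _ (by positivity), ← Real.sqrt_mul (by positivity), div_eq_mul_inv, mul_comm]

lemma key_matrix {B C : Matrix (Fin d) (Fin d) ℝ} (hB : IsUnit B.det) (hC : IsUnit C.det)
    (hBC : IsUnit (B + C).det) :
    B - B * (B + C)⁻¹ * B = (B⁻¹ + C⁻¹)⁻¹ := by
  have h1 : (B * (B + C)⁻¹ * C) * (B⁻¹ + C⁻¹) = 1 := by
    rw [Matrix.mul_add]
    have e1 : B * (B + C)⁻¹ * C * C⁻¹ = B * (B + C)⁻¹ := by
      rw [Matrix.mul_assoc (B * (B + C)⁻¹), Matrix.mul_nonsing_inv _ hC, Matrix.mul_one]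
    have e2 : B * (B + C)⁻¹ * C * B⁻¹ + B * (B + C)⁻¹ = B * (B + C)⁻¹ * ((C + B) * B⁻¹) := by
      rw [Matrix.add_mul, Matrix.mul_add, Matrix.mul_nonsing_inv _ hB, ← Matrix.mul_assoc]
      rw [Matrix.mul_one]
    rw [e1, e2, add_comm C B, ← Matrix.mul_assoc, Matrix.mul_assoc B,
      Matrix.nonsing_inv_mul _ hBC, Matrix.mul_one, Matrix.mul_nonsing_inv _ hB]
  have h2 : (B⁻¹ + C⁻¹)⁻¹ = B * (B + C)⁻¹ * C := Matrix.inv_eq_left_inv h1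
  rw [h2]
  have e3 : B * (B + C)⁻¹ * (B + C) = B := by
    rw [Matrix.mul_assoc, Matrix.nonsing_inv_mul _ hBC, Matrix.mul_one]
  calc B - B * (B + C)⁻¹ * B = B * (B + C)⁻¹ * (B + C) - B * (B + C)⁻¹ * B := by rw [e3]
    _ = B * (B + C)⁻¹ * ((B + C) - B) := by rw [Matrix.mul_sub]
    _ = B * (B + C)⁻¹ * C := by rw [add_sub_cancel_left]

lemma complete_square {B C : Matrix (Fin d) (Fin d) ℝ} (hB : B.PosDef) (hC : C.PosDef)
    (c y : Fin d → ℝ) :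
    (c - y) ⬝ᵥ B.mulVec (c - y) + y ⬝ᵥ C.mulVec y
      = (y - (B + C)⁻¹.mulVec (B.mulVec c)) ⬝ᵥ
          (B + C).mulVec (y - (B + C)⁻¹.mulVec (B.mulVec c))
        + c ⬝ᵥ (B⁻¹ + C⁻¹)⁻¹.mulVec c := by
  have hBd : IsUnit B.det := isUnit_iff_ne_zero.2 hB.det_pos.ne'
  have hCd : IsUnit C.det := isUnit_iff_ne_zero.2 hC.det_pos.ne'
  have hBCd : IsUnit (B + C).det := isUnit_iff_ne_zero.2 (hB.add hC).det_pos.ne'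
  have hBt : Bᵀ = B := tr_eq hB.1
  have hBCt : (B + C)ᵀ = (B + C) := tr_eq (hB.add hC).1
  set v := (B + C)⁻¹.mulVec (B.mulVec c) with hvdef
  set K := (B⁻¹ + C⁻¹)⁻¹ with hKdef
  have hv : (B + C).mulVec v = B.mulVec c := by
    rw [hvdef, Matrix.mulVec_mulVec, Matrix.mul_nonsing_inv _ hBCd, Matrix.one_mulVec]
  have f1 : y ⬝ᵥ (B + C).mulVec v = y ⬝ᵥ B.mulVec c := by rw [hv]
  have f2 : v ⬝ᵥ (B + C).mulVec y = y ⬝ᵥ B.mulVec c := by rw [dot_symm hBCt, hv]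
  have f3 : c ⬝ᵥ B.mulVec y = y ⬝ᵥ B.mulVec c := dot_symm hBt c y
  have f4 : v ⬝ᵥ (B + C).mulVec v = c ⬝ᵥ B.mulVec c - c ⬝ᵥ K.mulVec c := by
    have hBK : B * (B + C)⁻¹ * B = B - K := by
      have := key_matrix hBd hCd hBCd
      rw [hKdef, ← this]
      abel
    calc v ⬝ᵥ (B + C).mulVec v = v ⬝ᵥ B.mulVec c := by rw [hv]
      _ = c ⬝ᵥ B.mulVec v := dot_symm hBt v c
      _ = c ⬝ᵥ (B * (B + C)⁻¹ * B).mulVec c := by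
          rw [hvdef, Matrix.mulVec_mulVec, Matrix.mulVec_mulVec, Matrix.mul_assoc]
      _ = c ⬝ᵥ B.mulVec c - c ⬝ᵥ K.mulVec c := by
          rw [hBK, Matrix.sub_mulVec, dotProduct_sub]
  simp only [Matrix.mulVec_sub, dotProduct_sub, sub_dotProduct]
  rw [f1, f2, f4, f3]
  simp only [Matrix.add_mulVec, dotProduct_add]
  ring

lemma gauss_int_shift (A : Matrix (Fin d) (Fin d) ℝ) (hA : A.PosDef) (v : Fin d → ℝ) :
    ∫ x : Fin d → ℝ, Real.exp (-(1/2) * ((x - v) ⬝ᵥ A.mulVec (x - v)))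
      = Real.sqrt ((2 * π) ^ d / A.det) := by
  rw [MeasureTheory.integral_sub_right_eq_self
    (fun x => Real.exp (-(1/2) * (x ⬝ᵥ A.mulVec x))) v]
  exact gauss_int A hA

lemma step {B C : Matrix (Fin d) (Fin d) ℝ} (hB : B.PosDef) (hC : C.PosDef) (a m : Fin d → ℝ) :
    ∫ y : Fin d → ℝ, Real.exp (-(1/2) * ((a - y) ⬝ᵥ B.mulVec (a - y)))
        * Real.exp (-(1/2) * ((y - m) ⬝ᵥ C.mulVec (y - m)))
      = Real.sqrt ((2 * π) ^ d / (B + C).det)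
        * Real.exp (-(1/2) * ((a - m) ⬝ᵥ (B⁻¹ + C⁻¹)⁻¹.mulVec (a - m))) := by
  set c := a - m with hc
  set v := (B + C)⁻¹.mulVec (B.mulVec c) with hv
  have h1 : ∀ y : Fin d → ℝ,
      Real.exp (-(1/2) * ((a - y) ⬝ᵥ B.mulVec (a - y)))
        * Real.exp (-(1/2) * ((y - m) ⬝ᵥ C.mulVec (y - m)))
      = (fun z => Real.exp (-(1/2) * ((c - z) ⬝ᵥ B.mulVec (c - z)))
          * Real.exp (-(1/2) * (z ⬝ᵥ C.mulVec z))) (y - m) := by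
    intro y
    simp only
    rw [show c - (y - m) = a - y by rw [hc]; abel]
  calc ∫ y : Fin d → ℝ, Real.exp (-(1/2) * ((a - y) ⬝ᵥ B.mulVec (a - y)))
        * Real.exp (-(1/2) * ((y - m) ⬝ᵥ C.mulVec (y - m)))
      = ∫ y : Fin d → ℝ, (fun z => Real.exp (-(1/2) * ((c - z) ⬝ᵥ B.mulVec (c - z)))
          * Real.exp (-(1/2) * (z ⬝ᵥ C.mulVec z))) (y - m) := by simp_rw [h1]
    _ = ∫ z : Fin d → ℝ, Real.exp (-(1/2) * ((c - z) ⬝ᵥ B.mulVec (c - z)))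
          * Real.exp (-(1/2) * (z ⬝ᵥ C.mulVec z)) :=
        MeasureTheory.integral_sub_right_eq_self (μ := volume)
          (fun z => Real.exp (-(1/2) * ((c - z) ⬝ᵥ B.mulVec (c - z)))
            * Real.exp (-(1/2) * (z ⬝ᵥ C.mulVec z))) m
    _ = ∫ z : Fin d → ℝ, Real.exp (-(1/2) * ((z - v) ⬝ᵥ (B + C).mulVec (z - v)))
          * Real.exp (-(1/2) * (c ⬝ᵥ (B⁻¹ + C⁻¹)⁻¹.mulVec c)) := by
        apply integral_congr_ae
        filter_upwards with z
        rw [← Real.exp_add, ← Real.exp_add]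
        congr 1
        have := complete_square hB hC c z
        rw [← hv] at this
        linarith
    _ = (∫ z : Fin d → ℝ, Real.exp (-(1/2) * ((z - v) ⬝ᵥ (B + C).mulVec (z - v))))
          * Real.exp (-(1/2) * (c ⬝ᵥ (B⁻¹ + C⁻¹)⁻¹.mulVec c)) :=
        MeasureTheory.integral_mul_const _ _
    _ = Real.sqrt ((2 * π) ^ d / (B + C).det)
          * Real.exp (-(1/2) * (c ⬝ᵥ (B⁻¹ + C⁻¹)⁻¹.mulVec c)) := by
        rw [gauss_int_shift _ (hB.add hC) v]

lemma continuous_quad (M : Matrix (Fin d) (Fin d) ℝ) (μ : Fin d → ℝ) :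
    Continuous fun x : Fin d → ℝ => (x - μ) ⬝ᵥ M.mulVec (x - μ) := by
  simp only [dotProduct, Matrix.mulVec]
  refine continuous_finset_sum _ fun i _ => ?_
  refine Continuous.mul ?_ ?_
  · exact ((continuous_apply i).sub continuous_const)
  · exact continuous_finset_sum _ fun j _ =>
      continuous_const.mul ((continuous_apply j).sub continuous_const)

lemma gaussianPdf_nonneg {μ : Fin d → ℝ} {S : Matrix (Fin d) (Fin d) ℝ} (hS : 0 < S.det)
    (x : Fin d → ℝ) : 0 ≤ gaussianPdf μ S x := by
  unfold gaussianPdf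
  positivity

lemma integral_gaussianMeasure {μ : Fin d → ℝ} {S : Matrix (Fin d) (Fin d) ℝ} (hS : 0 < S.det)
    (g : (Fin d → ℝ) → ℝ) :
    ∫ x, g x ∂(gaussianMeasure μ S) = ∫ x, gaussianPdf μ S x * g x := by
  have hcont : Continuous fun x => gaussianPdf μ S x := by
    unfold gaussianPdf
    exact continuous_const.mul
      (Real.continuous_exp.comp (continuous_const.mul (continuous_quad S⁻¹ μ)))
  have hmeas : Measurable fun x => (gaussianPdf μ S x).toNNReal :=
    (measurable_real_toNNReal.comp hcont.measurable)
  rw [gaussianMeasure]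
  have : (fun x => ENNReal.ofReal (gaussianPdf μ S x))
      = fun x => ((gaussianPdf μ S x).toNNReal : ℝ≥0∞) := rfl
  rw [this, integral_withDensity_eq_integral_smul hmeas g]
  apply integral_congr_ae
  filter_upwards with x
  rw [NNReal.smul_def, smul_eq_mul, Real.coe_toNNReal _ (gaussianPdf_nonneg hS x)]

lemma c_combine (D E : ℝ) (hD : 0 < D) (hE : 0 < E) :
    (2 * π) ^ (-(d : ℝ) / 2) * D ^ (-(1 : ℝ)/2) * Real.sqrt ((2 * π) ^ d / E)
      = 1 / Real.sqrt (D * E) := by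
  have h2π : (0:ℝ) < 2 * π := by positivity
  have ha : (0:ℝ) < (2 * π) ^ d := by positivity
  have h1 : (2 * π) ^ (-(d : ℝ) / 2) = 1 / Real.sqrt ((2 * π) ^ d) := by
    rw [← rpow_neg_half _ ha, ← Real.rpow_natCast (2 * π) d, ← Real.rpow_mul h2π.le]
    congr 1
    ring
  rw [h1, rpow_neg_half _ hD, Real.sqrt_div ha.le, Real.sqrt_mul hD.le]
  have s1 : 0 < Real.sqrt ((2 * π) ^ d) := Real.sqrt_pos.2 ha
  have s2 : 0 < Real.sqrt D := Real.sqrt_pos.2 hD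
  have s3 : 0 < Real.sqrt E := Real.sqrt_pos.2 hE
  field_simp

end GaussAux

open GaussAux Real

/-- For Gaussians `P = N(m₁,Σ₁)`, `Q = N(m₂,Σ₂)` and the Gaussian kernel
`k(x,y) = exp(-(γ/2)‖x-y‖²)`, the inner product of kernel mean embeddings
`⟨μ_k(P), μ_k(Q)⟩ = ∬ k(x,y) dP(x) dQ(y)` equals
`exp(-(1/2)(m₁-m₂)ᵀ(Σ₁+Σ₂+γ⁻¹I)⁻¹(m₁-m₂)) / det(γΣ₁+γΣ₂+I)^{1/2}`. -/
theorem stmt_7 (d : ℕ) (γ : ℝ) (hγ : 0 < γ) (m₁ m₂ : Fin d → ℝ)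
    (S₁ S₂ : Matrix (Fin d) (Fin d) ℝ) (h₁ : S₁.PosDef) (h₂ : S₂.PosDef) :
    ∫ x, ∫ y, Real.exp (-(γ / 2) * ∑ l, (x l - y l) ^ 2)
        ∂(gaussianMeasure m₂ S₂) ∂(gaussianMeasure m₁ S₁) =
      Real.exp (-(1 / 2) * ((m₁ - m₂) ⬝ᵥ (S₁ + S₂ + γ⁻¹ • (1 : Matrix (Fin d) (Fin d) ℝ))⁻¹.mulVec
          (m₁ - m₂))) /
        Real.sqrt ((γ • S₁ + γ • S₂ + 1 : Matrix (Fin d) (Fin d) ℝ).det) := by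
  have hS₁u : IsUnit S₁.det := isUnit_iff_ne_zero.2 h₁.det_pos.ne'
  have hS₂u : IsUnit S₂.det := isUnit_iff_ne_zero.2 h₂.det_pos.ne'
  set Bγ : Matrix (Fin d) (Fin d) ℝ := γ • 1 with hBγdef
  have hBγ : Bγ.PosDef := posDef_smul_one hγ
  set M₂ : Matrix (Fin d) (Fin d) ℝ := γ⁻¹ • 1 + S₂ with hM₂def
  have hM₂ : M₂.PosDef := (posDef_smul_one (inv_pos.2 hγ)).add h₂
  have hM₂u : IsUnit M₂.det := isUnit_iff_ne_zero.2 hM₂.det_pos.ne'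
  set K₂ : Matrix (Fin d) (Fin d) ℝ := M₂⁻¹ with hK₂def
  have hK₂ : K₂.PosDef := hM₂.inv
  have hBS : (Bγ⁻¹ + (S₂⁻¹)⁻¹)⁻¹ = K₂ := by
    rw [hK₂def, hBγdef, inv_smul_one hγ.ne', Matrix.nonsing_inv_nonsing_inv _ hS₂u, hM₂def]
  -- determinant for the inner constant
  have hE₂ : 0 < (Bγ + S₂⁻¹).det := (hBγ.add h₂.inv).det_pos
  have hdet2 : S₂.det * (Bγ + S₂⁻¹).det = (γ • S₂ + 1).det := by
    rw [← Matrix.det_mul, Matrix.mul_add, Matrix.mul_nonsing_inv _ hS₂u, hBγdef,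
      Matrix.mul_smul, Matrix.mul_one]
  have hΔ₂ : 0 < (γ • S₂ + 1 : Matrix (Fin d) (Fin d) ℝ).det := by
    rw [← hdet2]; exact mul_pos h₂.det_pos hE₂
  -- inner integral
  have inner : ∀ x : Fin d → ℝ,
      ∫ y, Real.exp (-(γ/2) * ∑ l, (x l - y l)^2) ∂(gaussianMeasure m₂ S₂)
        = (1 / Real.sqrt ((γ • S₂ + 1).det))
            * Real.exp (-(1/2) * ((x - m₂) ⬝ᵥ K₂.mulVec (x - m₂))) := by
    intro x
    rw [integral_gaussianMeasure h₂.det_pos]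
    have hker : ∀ y : Fin d → ℝ,
        gaussianPdf m₂ S₂ y * Real.exp (-(γ/2) * ∑ l, (x l - y l)^2)
        = ((2*π) ^ (-(d:ℝ)/2) * S₂.det ^ (-(1:ℝ)/2)) *
          (Real.exp (-(1/2) * ((x - y) ⬝ᵥ Bγ.mulVec (x - y))) *
           Real.exp (-(1/2) * ((y - m₂) ⬝ᵥ S₂⁻¹.mulVec (y - m₂)))) := by
      intro y
      unfold gaussianPdf
      rw [Fintype.card_fin]
      have hq : -(γ/2) * ∑ l, (x l - y l)^2 = -(1/2) * ((x - y) ⬝ᵥ Bγ.mulVec (x - y)) := by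
        rw [hBγdef, Matrix.smul_mulVec, Matrix.one_mulVec, dotProduct_smul,
          smul_eq_mul]
        have h' : (x - y) ⬝ᵥ (x - y) = ∑ l, (x l - y l)^2 := by
          simp [dotProduct, pow_two]
        rw [h']; ring
      rw [hq]; ring
    simp_rw [hker]
    rw [integral_const_mul _ _, step hBγ h₂.inv x m₂, hBS,
      ← mul_assoc, c_combine S₂.det _ h₂.det_pos hE₂, hdet2]
  -- outer integral
  calc ∫ x, (∫ y, Real.exp (-(γ / 2) * ∑ l, (x l - y l) ^ 2) ∂(gaussianMeasure m₂ S₂))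
        ∂(gaussianMeasure m₁ S₁)
      = ∫ x, gaussianPdf m₁ S₁ x * ((1 / Real.sqrt ((γ • S₂ + 1).det))
          * Real.exp (-(1/2) * ((x - m₂) ⬝ᵥ K₂.mulVec (x - m₂)))) := by
        rw [integral_gaussianMeasure h₁.det_pos]
        apply integral_congr_ae
        filter_upwards with x
        rw [inner x]
    _ = ∫ x, ((1 / Real.sqrt ((γ • S₂ + 1).det)) * ((2*π) ^ (-(d:ℝ)/2) * S₁.det ^ (-(1:ℝ)/2)))
          * (Real.exp (-(1/2) * ((m₂ - x) ⬝ᵥ K₂.mulVec (m₂ - x)))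
             * Real.exp (-(1/2) * ((x - m₁) ⬝ᵥ S₁⁻¹.mulVec (x - m₁)))) := by
        apply integral_congr_ae
        filter_upwards with x
        unfold gaussianPdf
        rw [Fintype.card_fin]
        have hneg : (m₂ - x) ⬝ᵥ K₂.mulVec (m₂ - x) = (x - m₂) ⬝ᵥ K₂.mulVec (x - m₂) := by
          have := neg_quad K₂ (x - m₂)
          rw [neg_sub] at this
          exact this
        rw [hneg]; ring
    _ = ((1 / Real.sqrt ((γ • S₂ + 1).det)) * ((2*π) ^ (-(d:ℝ)/2) * S₁.det ^ (-(1:ℝ)/2)))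
          * (Real.sqrt ((2 * π) ^ d / (K₂ + S₁⁻¹).det)
             * Real.exp (-(1/2) * ((m₂ - m₁) ⬝ᵥ (K₂⁻¹ + (S₁⁻¹)⁻¹)⁻¹.mulVec (m₂ - m₁)))) := by
        rw [integral_const_mul _ _, step hK₂ h₁.inv m₂ m₁]
    _ = Real.exp (-(1 / 2) * ((m₁ - m₂) ⬝ᵥ
          (S₁ + S₂ + γ⁻¹ • (1 : Matrix (Fin d) (Fin d) ℝ))⁻¹.mulVec (m₁ - m₂)))
        / Real.sqrt ((γ • S₁ + γ • S₂ + 1 : Matrix (Fin d) (Fin d) ℝ).det) := by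
        have hKinv : (K₂⁻¹ + (S₁⁻¹)⁻¹)⁻¹
            = (S₁ + S₂ + γ⁻¹ • (1 : Matrix (Fin d) (Fin d) ℝ))⁻¹ := by
          rw [hK₂def, Matrix.nonsing_inv_nonsing_inv _ hM₂u,
            Matrix.nonsing_inv_nonsing_inv _ hS₁u]
          congr 1
          rw [hM₂def]; abel
        have hnegm : (m₂ - m₁) ⬝ᵥ (S₁ + S₂ + γ⁻¹ • (1 : Matrix (Fin d) (Fin d) ℝ))⁻¹.mulVec
            (m₂ - m₁) = (m₁ - m₂) ⬝ᵥ (S₁ + S₂ + γ⁻¹ • (1 : Matrix (Fin d) (Fin d) ℝ))⁻¹.mulVec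
            (m₁ - m₂) := by
          have := neg_quad (S₁ + S₂ + γ⁻¹ • (1 : Matrix (Fin d) (Fin d) ℝ))⁻¹ (m₁ - m₂)
          rw [neg_sub] at this
          exact this
        have hE₃ : 0 < (K₂ + S₁⁻¹).det := (hK₂.add h₁.inv).det_pos
        have hc : (2*π) ^ (-(d:ℝ)/2) * S₁.det ^ (-(1:ℝ)/2)
              * Real.sqrt ((2 * π) ^ d / (K₂ + S₁⁻¹).det)
            = 1 / Real.sqrt (S₁.det * (K₂ + S₁⁻¹).det) :=
          c_combine S₁.det _ h₁.det_pos hE₃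
        have hdetfinal : (γ • S₂ + 1 : Matrix (Fin d) (Fin d) ℝ).det
            * (S₁.det * (K₂ + S₁⁻¹).det)
            = (γ • S₁ + γ • S₂ + 1 : Matrix (Fin d) (Fin d) ℝ).det := by
          have eA : S₁.det * (K₂ + S₁⁻¹).det = (S₁ + M₂).det * M₂.det⁻¹ := by
            calc S₁.det * (K₂ + S₁⁻¹).det = (S₁ * (K₂ + S₁⁻¹)).det := (Matrix.det_mul _ _).symm
              _ = (S₁ * K₂ + 1).det := by
                  rw [Matrix.mul_add, Matrix.mul_nonsing_inv _ hS₁u]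
              _ = ((S₁ + M₂) * K₂).det := by
                  rw [Matrix.add_mul, hK₂def, Matrix.mul_nonsing_inv _ hM₂u]
              _ = (S₁ + M₂).det * M₂.det⁻¹ := by
                  rw [Matrix.det_mul, hK₂def, Matrix.det_nonsing_inv, Ring.inverse_eq_inv]
          have eC : (γ • S₂ + 1 : Matrix (Fin d) (Fin d) ℝ) = γ • M₂ := by
            rw [hM₂def, smul_add, smul_smul, mul_inv_cancel₀ hγ.ne', one_smul, add_comm]
          have eD : (γ • S₁ + γ • S₂ + 1 : Matrix (Fin d) (Fin d) ℝ) = γ • (S₁ + M₂) := by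
            rw [hM₂def, smul_add, smul_add, smul_smul, mul_inv_cancel₀ hγ.ne', one_smul]
            abel
          rw [eA, eC, eD, Matrix.det_smul, Matrix.det_smul, Fintype.card_fin]
          field_simp [hM₂.det_pos.ne']
        rw [hKinv, hnegm]
        have hrearr : (1 / Real.sqrt ((γ • S₂ + 1).det) * ((2*π) ^ (-(d:ℝ)/2)
              * S₁.det ^ (-(1:ℝ)/2)))
            * (Real.sqrt ((2 * π) ^ d / (K₂ + S₁⁻¹).det)
               * Real.exp (-(1/2) * ((m₁ - m₂) ⬝ᵥ
                  (S₁ + S₂ + γ⁻¹ • (1 : Matrix (Fin d) (Fin d) ℝ))⁻¹.mulVec (m₁ - m₂))))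
            = ((2*π) ^ (-(d:ℝ)/2) * S₁.det ^ (-(1:ℝ)/2)
                * Real.sqrt ((2 * π) ^ d / (K₂ + S₁⁻¹).det))
              * (1 / Real.sqrt ((γ • S₂ + 1).det))
              * Real.exp (-(1/2) * ((m₁ - m₂) ⬝ᵥ
                  (S₁ + S₂ + γ⁻¹ • (1 : Matrix (Fin d) (Fin d) ℝ))⁻¹.mulVec (m₁ - m₂))) := by
          ring
        rw [hrearr, hc, div_mul_div_comm, one_mul,
          ← Real.sqrt_mul (mul_pos h₁.det_pos hE₃).le,
          mul_comm (S₁.det * (K₂ + S₁⁻¹).det) _, hdetfinal, one_div, inv_mul_eq_div]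
end

section
/- Let k(x,y) = exp(−(γ/2)‖x−y‖²) on ℝ^d with γ > 0, and let X = (X_m)_{m=1}^M ∼ N(m, Σ) =: P with Σ = [Σ_{i,j}] partitioned into M blocks. With Σ₁ = Σ and Σ₂ = blockdiag(Σ_{1,1},…,Σ_{M,M}), the squared HSIC equals HSIC_k²(P) = det(2γΣ₁+I_d)^{−1/2} + det(2γΣ₂+I_d)^{−1/2} − 2·det(γΣ₁+γΣ₂+I_d)^{−1/2}. -/
open MeasureTheory Matrix

/-- `∬ k dP dQ` for the Gaussian kernel of bandwidth `γ`. -/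
noncomputable def gaussKernelII {ι : Type*} [Fintype ι] [DecidableEq ι] (γ : ℝ)
    (P Q : Measure (ι → ℝ)) : ℝ :=
  ∫ x, ∫ y, Real.exp (-(γ / 2) * ∑ l, (x l - y l) ^ 2) ∂Q ∂P

section Aux
open Real
open scoped NNReal ENNReal
set_option linter.unusedSectionVars false
set_option maxHeartbeats 1000000

variable {ι : Type*} [Fintype ι] [DecidableEq ι]

lemma integral_comp_mulVec {R : Matrix ι ι ℝ} (hR : R.det ≠ 0) (g : (ι → ℝ) → ℝ) :
    ∫ x : ι → ℝ, g (R *ᵥ x) = |R.det|⁻¹ * ∫ z : ι → ℝ, g z := by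
  have hinv : R⁻¹ * R = 1 := Matrix.nonsing_inv_mul R (Ne.isUnit hR)
  have hinv' : R * R⁻¹ = 1 := Matrix.mul_nonsing_inv R (Ne.isUnit hR)
  let e : (ι → ℝ) ≃ (ι → ℝ) :=
    { toFun := fun x => R *ᵥ x
      invFun := fun x => R⁻¹ *ᵥ x
      left_inv := fun x => by simp [Matrix.mulVec_mulVec, hinv]
      right_inv := fun x => by simp [Matrix.mulVec_mulVec, hinv'] }
  have hcont : Continuous (fun x : ι → ℝ => R *ᵥ x) := by
    have : (fun x : ι → ℝ => R *ᵥ x) = fun x => Matrix.toLin' R x := by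
      ext x i; simp [Matrix.toLin'_apply]
    rw [this]
    exact LinearMap.continuous_on_pi _
  have hcont' : Continuous (fun x : ι → ℝ => R⁻¹ *ᵥ x) := by
    have : (fun x : ι → ℝ => R⁻¹ *ᵥ x) = fun x => Matrix.toLin' R⁻¹ x := by
      ext x i; simp [Matrix.toLin'_apply]
    rw [this]
    exact LinearMap.continuous_on_pi _
  let h : (ι → ℝ) ≃ₜ (ι → ℝ) := { e with continuous_toFun := hcont, continuous_invFun := hcont' }
  have hemb : MeasurableEmbedding (fun x : ι → ℝ => R *ᵥ x) :=
    h.toMeasurableEquiv.measurableEmbedding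
  have hmap : Measure.map (fun x : ι → ℝ => R *ᵥ x) volume
      = ENNReal.ofReal |R.det|⁻¹ • volume := by
    rw [show |R.det|⁻¹ = |R.det⁻¹| from (abs_inv _).symm]
    have := Real.map_matrix_volume_pi_eq_smul_volume_pi hR
    rw [← this]
    rfl
  calc ∫ x : ι → ℝ, g (R *ᵥ x)
      = ∫ z, g z ∂(Measure.map (fun x : ι → ℝ => R *ᵥ x) volume) := (hemb.integral_map g).symm
    _ = |R.det|⁻¹ * ∫ z : ι → ℝ, g z := by
        rw [hmap, integral_smul_measure, ENNReal.toReal_ofReal (by positivity), smul_eq_mul]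

lemma herm_real {A : Matrix ι ι ℝ} (h : A.IsHermitian) : Aᵀ = A := by
  rw [← conjTranspose_eq_transpose_of_trivial]; exact h

lemma smul_posDef {c : ℝ} (hc : 0 < c) {A : Matrix ι ι ℝ} (hA : A.PosDef) :
    (c • A).PosDef := by
  refine ⟨?_, fun x hx => ?_⟩
  · unfold Matrix.IsHermitian
    rw [conjTranspose_smul, conjTranspose_eq_transpose_of_trivial, herm_real hA.1]
    simp
  · have := hA.2 hx
    simpa [Finsupp.sum, Finset.mul_sum, mul_assoc, mul_left_comm] using mul_pos hc this

lemma integral_exp_neg_half_dot :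
    ∫ z : ι → ℝ, Real.exp (-(1/2) * (z ⬝ᵥ z)) = (2*π) ^ ((Fintype.card ι : ℝ)/2) := by
  have h : ∀ z : ι → ℝ, Real.exp (-(1/2) * (z ⬝ᵥ z)) = ∏ i, Real.exp (-(1/2) * (z i)^2) := by
    intro z
    rw [← Real.exp_sum]
    congr 1
    simp [dotProduct, Finset.mul_sum, sq]
  simp_rw [h]
  rw [MeasureTheory.volume_pi, MeasureTheory.integral_fintype_prod_eq_pow (ι := ι) (fun x : ℝ => Real.exp (-(1/2) * x^2))]
  have : ∫ x : ℝ, Real.exp (-(1/2) * x^2) = Real.sqrt (2*π) := by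
    rw [integral_gaussian (1/2)]
    rw [show π / (1/2) = 2*π by ring]
  rw [this, ← Real.rpow_natCast (Real.sqrt (2*π)), Real.sqrt_eq_rpow, ← Real.rpow_mul (by positivity)]
  norm_num
  ring_nf

open scoped MatrixOrder in
lemma gauss_quad {C : Matrix ι ι ℝ} (hC : C.PosDef) (b : ι → ℝ) :
    ∫ x : ι → ℝ, Real.exp (-(1/2) * (x ⬝ᵥ C *ᵥ x) + b ⬝ᵥ x)
      = (2*π) ^ ((Fintype.card ι : ℝ)/2) * C.det ^ (-(1:ℝ)/2)
        * Real.exp ((1/2) * (b ⬝ᵥ C⁻¹ *ᵥ b)) := by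
  have hH := hC.1
  set R := CFC.sqrt C with hRdef
  have hRR : R * R = C := CFC.sqrt_mul_sqrt_self C hC.posSemidef.nonneg
  have hRsym : Rᵀ = R := herm_real (CFC.sqrt_nonneg C).posSemidef.1
  have hdet2 : R.det * R.det = C.det := by rw [← det_mul, hRR]
  have hCd : 0 < C.det := hC.det_pos
  have hdet_ne : R.det ≠ 0 := by
    intro h; rw [h, mul_zero] at hdet2; exact hCd.ne hdet2
  have habs : |R.det| = Real.sqrt C.det := by
    rw [← hdet2, ← sq, Real.sqrt_sq_eq_abs]
  have hRinv_sym : (R⁻¹)ᵀ = R⁻¹ := by rw [transpose_nonsing_inv, hRsym]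
  have hRRinv : R * R⁻¹ = 1 := Matrix.mul_nonsing_inv R (Ne.isUnit hdet_ne)
  have hCinv : R⁻¹ * R⁻¹ = C⁻¹ := by rw [← hRR, Matrix.mul_inv_rev]
  set c := R⁻¹ *ᵥ b with hcdef
  have hvec : ∀ u : ι → ℝ, u ᵥ* R = R *ᵥ u := by
    intro u; rw [← hRsym, vecMul_transpose, hRsym]
  have hvecinv : ∀ u : ι → ℝ, u ᵥ* R⁻¹ = R⁻¹ *ᵥ u := by
    intro u; rw [← hRinv_sym, vecMul_transpose, hRinv_sym]
  have hpt : ∀ x : ι → ℝ, -(1/2) * (x ⬝ᵥ C *ᵥ x) + b ⬝ᵥ x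
      = -(1/2) * ((R *ᵥ x) ⬝ᵥ (R *ᵥ x)) + c ⬝ᵥ (R *ᵥ x) := by
    intro x
    have h1 : x ⬝ᵥ C *ᵥ x = (R *ᵥ x) ⬝ᵥ (R *ᵥ x) := by
      rw [← hRR, ← Matrix.mulVec_mulVec, dotProduct_mulVec, hvec]
    have h2 : c ⬝ᵥ (R *ᵥ x) = b ⬝ᵥ x := by
      rw [dotProduct_mulVec, hvec, hcdef, Matrix.mulVec_mulVec, hRRinv, Matrix.one_mulVec]
    rw [h1, h2]
  have hcc : c ⬝ᵥ c = b ⬝ᵥ C⁻¹ *ᵥ b := by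
    rw [hcdef]
    rw [dotProduct_mulVec, hvecinv, Matrix.mulVec_mulVec, hCinv, dotProduct_comm]
  calc ∫ x : ι → ℝ, Real.exp (-(1/2) * (x ⬝ᵥ C *ᵥ x) + b ⬝ᵥ x)
      = ∫ x : ι → ℝ, (fun z => Real.exp (-(1/2) * (z ⬝ᵥ z) + c ⬝ᵥ z)) (R *ᵥ x) := by
        simp_rw [hpt]
    _ = |R.det|⁻¹ * ∫ z : ι → ℝ, Real.exp (-(1/2) * (z ⬝ᵥ z) + c ⬝ᵥ z) :=
        integral_comp_mulVec hdet_ne (fun z => Real.exp (-(1/2) * (z ⬝ᵥ z) + c ⬝ᵥ z))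
    _ = |R.det|⁻¹ * ∫ z : ι → ℝ, Real.exp ((1/2) * (c ⬝ᵥ c)) * Real.exp (-(1/2) * ((z - c) ⬝ᵥ (z - c))) := by
        congr 1
        apply integral_congr_ae; filter_upwards with z
        rw [← Real.exp_add]
        congr 1
        simp only [dotProduct_sub, sub_dotProduct, dotProduct_comm c z]
        ring
    _ = |R.det|⁻¹ * (Real.exp ((1/2) * (c ⬝ᵥ c)) * ∫ z : ι → ℝ, Real.exp (-(1/2) * ((z - c) ⬝ᵥ (z - c)))) := by
        rw [MeasureTheory.integral_const_mul]
    _ = |R.det|⁻¹ * (Real.exp ((1/2) * (c ⬝ᵥ c)) * ∫ z : ι → ℝ, Real.exp (-(1/2) * (z ⬝ᵥ z))) := by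
        rw [integral_sub_right_eq_self (fun z : ι → ℝ => Real.exp (-(1/2) * (z ⬝ᵥ z))) c]
    _ = (2*π) ^ ((Fintype.card ι : ℝ)/2) * C.det ^ (-(1:ℝ)/2) * Real.exp ((1/2) * (b ⬝ᵥ C⁻¹ *ᵥ b)) := by
        rw [integral_exp_neg_half_dot, hcc, habs]
        rw [show (-(1:ℝ)/2) = -(1/2) by norm_num, Real.rpow_neg hCd.le,
          show ((1:ℝ)/2) = (1/2:ℝ) by norm_num, ← Real.sqrt_eq_rpow]
        ring

lemma continuous_quadform (S : Matrix ι ι ℝ) (μ : ι → ℝ) :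
    Continuous (fun x : ι → ℝ => (x - μ) ⬝ᵥ S *ᵥ (x - μ)) := by
  simp only [dotProduct, Matrix.mulVec, dotProduct]
  fun_prop

lemma gaussianPdf_nonneg {S : Matrix ι ι ℝ} (hS : 0 < S.det) (μ : ι → ℝ) (x : ι → ℝ) :
    0 ≤ gaussianPdf μ S x := by
  unfold gaussianPdf
  have h1 : (0:ℝ) < (2 * Real.pi) ^ (-(Fintype.card ι : ℝ) / 2) :=
    Real.rpow_pos_of_pos (by positivity) _
  have h2 : (0:ℝ) < S.det ^ (-(1 : ℝ) / 2) := Real.rpow_pos_of_pos hS _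
  positivity

lemma continuous_gaussianPdf (μ : ι → ℝ) (S : Matrix ι ι ℝ) :
    Continuous (gaussianPdf μ S) := by
  unfold gaussianPdf
  exact (continuous_const.mul ((Real.continuous_exp.comp
    ((continuous_const.mul (continuous_quadform S⁻¹ μ)))))) |>.congr (fun x => rfl)

lemma integral_gaussianMeasure {S : Matrix ι ι ℝ} (hS : 0 < S.det) (m : ι → ℝ)
    (g : (ι → ℝ) → ℝ) :
    ∫ x, g x ∂(gaussianMeasure m S) = ∫ x, gaussianPdf m S x * g x := by
  unfold gaussianMeasure
  have hmeas : Measurable (fun x => Real.toNNReal (gaussianPdf m S x)) :=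
    (continuous_gaussianPdf m S).measurable.real_toNNReal
  rw [show (fun x => ENNReal.ofReal (gaussianPdf m S x))
      = (fun x => ((Real.toNNReal (gaussianPdf m S x) : ℝ≥0) : ℝ≥0∞)) from rfl]
  rw [integral_withDensity_eq_integral_smul hmeas g]
  congr 1
  ext x
  rw [NNReal.smul_def, smul_eq_mul, Real.coe_toNNReal _ (gaussianPdf_nonneg hS m x)]

lemma gauss_quad0 {C : Matrix ι ι ℝ} (hC : C.PosDef) :
    ∫ x : ι → ℝ, Real.exp (-(1/2) * (x ⬝ᵥ C *ᵥ x))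
      = (2*π) ^ ((Fintype.card ι : ℝ)/2) * C.det ^ (-(1:ℝ)/2) := by
  have h := gauss_quad hC 0
  simpa using h

lemma gaussKernelII_eq (γ : ℝ) (hγ : 0 < γ) (m : ι → ℝ) {A B : Matrix ι ι ℝ}
    (hA : A.PosDef) (hB : B.PosDef) :
    gaussKernelII γ (gaussianMeasure m A) (gaussianMeasure m B)
      = (γ • A + γ • B + (1 : Matrix ι ι ℝ)).det ^ (-(1:ℝ)/2) := by
  classical
  set n : ℝ := (Fintype.card ι : ℝ) with hn
  set E : Matrix ι ι ℝ := γ • B + 1 with hEdef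
  set C : Matrix ι ι ℝ := γ • (1 : Matrix ι ι ℝ) + B⁻¹ with hCdef
  set D : Matrix ι ι ℝ := γ • E⁻¹ with hDdef
  set F : Matrix ι ι ℝ := A⁻¹ + D with hFdef
  have hE : E.PosDef := (smul_posDef hγ hB).add Matrix.PosDef.one
  have hC : C.PosDef := (smul_posDef hγ Matrix.PosDef.one).add hB.inv
  have hD : D.PosDef := smul_posDef hγ hE.inv
  have hF : F.PosDef := hA.inv.add hD
  have hBd := hB.det_pos
  have hAd := hA.det_pos
  have hBinvB : B⁻¹ * B = 1 := Matrix.nonsing_inv_mul B hBd.ne'.isUnit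
  have hBBinv : B * B⁻¹ = 1 := Matrix.mul_nonsing_inv B hBd.ne'.isUnit
  have hEinvE : E⁻¹ * E = 1 := Matrix.nonsing_inv_mul E hE.det_pos.ne'.isUnit
  have hAAinv : A * A⁻¹ = 1 := Matrix.mul_nonsing_inv A hAd.ne'.isUnit
  have hBC : B * C = E := by
    rw [hCdef, hEdef, Matrix.mul_add, mul_smul_comm, Matrix.mul_one, hBBinv]
  have hCinv : C⁻¹ = E⁻¹ * B := by
    have h1 : C = B⁻¹ * E := by rw [← hBC, ← Matrix.mul_assoc, hBinvB, Matrix.one_mul]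
    rw [h1, Matrix.mul_inv_rev, Matrix.nonsing_inv_nonsing_inv B hBd.ne'.isUnit]
  have hDE : D * E = γ • (1 : Matrix ι ι ℝ) := by
    rw [hDdef, Matrix.smul_mul, hEinvE]
  have hID : γ • (1 : Matrix ι ι ℝ) - (γ^2) • C⁻¹ = D := by
    rw [hCinv]
    have h1 : γ • E - (γ^2) • B = γ • (1 : Matrix ι ι ℝ) := by
      rw [hEdef, smul_add, smul_smul, ← sq]
      abel
    have h2 : γ • (1 : Matrix ι ι ℝ) = E⁻¹ * (γ • E) := by
      rw [mul_smul_comm, hEinvE]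
    have h3 : (γ^2) • (E⁻¹ * B) = E⁻¹ * ((γ^2) • B) := by
      rw [mul_smul_comm]
    rw [h3]
    conv_lhs => rw [h2]
    rw [← mul_sub, h1, mul_smul_comm, Matrix.mul_one, hDdef]
  have hdetBC : B.det * C.det = E.det := by rw [← det_mul, hBC]
  have hAF : A * F = 1 + A * D := by rw [hFdef, Matrix.mul_add, hAAinv]
  have hdetAF : A.det * F.det = (1 + A * D).det := by rw [← det_mul, hAF]
  have h1ADE : (1 + A * D) * E = γ • A + E := by
    rw [Matrix.add_mul, Matrix.one_mul, Matrix.mul_assoc, hDE, mul_smul_comm, Matrix.mul_one]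
    abel
  have hdetprod : A.det * B.det * C.det * F.det = (γ • A + γ • B + 1).det := by
    calc A.det * B.det * C.det * F.det = (A.det * F.det) * (B.det * C.det) := by ring
      _ = (1 + A * D).det * E.det := by rw [hdetAF, hdetBC]
      _ = ((1 + A * D) * E).det := by rw [det_mul]
      _ = (γ • A + γ • B + 1).det := by rw [h1ADE, hEdef, add_assoc]
  -- sum of squares as dot product
  have hsq : ∀ x y : ι → ℝ, ∑ l, (x l - y l) ^ 2 = (x - y) ⬝ᵥ (x - y) := by
    intro x y; simp [dotProduct, sq]
  -- the inner integral
  have hInner : ∀ x : ι → ℝ,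
      ∫ y, Real.exp (-(γ / 2) * ∑ l, (x l - y l) ^ 2) ∂(gaussianMeasure m B)
        = B.det ^ (-(1:ℝ)/2) * C.det ^ (-(1:ℝ)/2)
          * Real.exp (-(1/2) * ((x - m) ⬝ᵥ D *ᵥ (x - m))) := by
    intro x
    set u : ι → ℝ := x - m with hu
    rw [integral_gaussianMeasure hBd m]
    have step1 : ∀ y : ι → ℝ,
        gaussianPdf m B y * Real.exp (-(γ / 2) * ∑ l, (x l - y l) ^ 2)
          = (2*π) ^ (-n/2) * B.det ^ (-(1:ℝ)/2)
            * Real.exp (-(1/2) * ((y - m) ⬝ᵥ B⁻¹ *ᵥ (y - m)) + -(γ/2) * ((x - y) ⬝ᵥ (x - y))) := by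
      intro y
      unfold gaussianPdf
      rw [hsq x y, Real.exp_add]
      ring
    simp_rw [step1, MeasureTheory.integral_const_mul]
    have step2 : ∫ y : ι → ℝ,
        Real.exp (-(1/2) * ((y - m) ⬝ᵥ B⁻¹ *ᵥ (y - m)) + -(γ/2) * ((x - y) ⬝ᵥ (x - y)))
        = ∫ v : ι → ℝ,
        Real.exp (-(1/2) * (v ⬝ᵥ C *ᵥ v) + (γ • u) ⬝ᵥ v) * Real.exp (-(γ/2) * (u ⬝ᵥ u)) := by
      rw [← integral_add_right_eq_self (μ := (volume : Measure (ι → ℝ)))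
        (fun y => Real.exp (-(1/2) * ((y - m) ⬝ᵥ B⁻¹ *ᵥ (y - m)) + -(γ/2) * ((x - y) ⬝ᵥ (x - y)))) m]
      apply integral_congr_ae; filter_upwards with v
      rw [← Real.exp_add]
      congr 1
      have hvm : v + m - m = v := by abel
      have hxvm : x - (v + m) = u - v := by rw [hu]; abel
      rw [hvm, hxvm]
      rw [hCdef]
      simp only [add_mulVec, Matrix.smul_mulVec, Matrix.one_mulVec, dotProduct_add,
        dotProduct_smul, smul_dotProduct, smul_eq_mul, dotProduct_sub, sub_dotProduct,
        dotProduct_comm v u]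
      ring
    rw [step2, MeasureTheory.integral_mul_const, gauss_quad hC (γ • u)]
    have hq : (γ • u) ⬝ᵥ C⁻¹ *ᵥ (γ • u) = γ^2 * (u ⬝ᵥ C⁻¹ *ᵥ u) := by
      rw [Matrix.mulVec_smul, smul_dotProduct, dotProduct_smul]
      simp [smul_eq_mul, sq]; ring
    have hDu : u ⬝ᵥ D *ᵥ u = γ * (u ⬝ᵥ u) - γ^2 * (u ⬝ᵥ C⁻¹ *ᵥ u) := by
      rw [← hID]
      simp only [sub_mulVec, Matrix.smul_mulVec, Matrix.one_mulVec, dotProduct_sub,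
        dotProduct_smul, smul_eq_mul]
    have hcancel : (2*π) ^ (-n/2) * (2*π) ^ (n/2) = 1 := by
      rw [← Real.rpow_add (by positivity), show -n/2 + n/2 = 0 by ring, Real.rpow_zero]
    calc (2*π) ^ (-n/2) * B.det ^ (-(1:ℝ)/2) *
          ((2*π) ^ (n/2) * C.det ^ (-(1:ℝ)/2) * Real.exp (1/2 * ((γ • u) ⬝ᵥ C⁻¹ *ᵥ (γ • u)))
            * Real.exp (-(γ/2) * (u ⬝ᵥ u)))
        = ((2*π) ^ (-n/2) * (2*π) ^ (n/2)) * (B.det ^ (-(1:ℝ)/2) * C.det ^ (-(1:ℝ)/2)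
            * (Real.exp (1/2 * ((γ • u) ⬝ᵥ C⁻¹ *ᵥ (γ • u))) * Real.exp (-(γ/2) * (u ⬝ᵥ u)))) := by
          ring
      _ = B.det ^ (-(1:ℝ)/2) * C.det ^ (-(1:ℝ)/2) * Real.exp (-(1/2) * (u ⬝ᵥ D *ᵥ u)) := by
          rw [hcancel, one_mul, ← Real.exp_add]
          congr 2
          rw [hq, hDu]
          ring
  -- outer integral
  unfold gaussKernelII
  rw [integral_gaussianMeasure hAd m]
  simp_rw [hInner]
  have step3 : ∀ x : ι → ℝ,
      gaussianPdf m A x * (B.det ^ (-(1:ℝ)/2) * C.det ^ (-(1:ℝ)/2)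
        * Real.exp (-(1/2) * ((x - m) ⬝ᵥ D *ᵥ (x - m))))
      = (2*π) ^ (-n/2) * A.det ^ (-(1:ℝ)/2) * B.det ^ (-(1:ℝ)/2) * C.det ^ (-(1:ℝ)/2)
        * Real.exp (-(1/2) * ((x - m) ⬝ᵥ F *ᵥ (x - m))) := by
    intro x
    unfold gaussianPdf
    rw [hFdef]
    have : (x - m) ⬝ᵥ (A⁻¹ + D) *ᵥ (x - m)
        = (x - m) ⬝ᵥ A⁻¹ *ᵥ (x - m) + (x - m) ⬝ᵥ D *ᵥ (x - m) := by
      rw [add_mulVec, dotProduct_add]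
    rw [this]
    rw [show -(1/2) * ((x - m) ⬝ᵥ A⁻¹ *ᵥ (x - m) + (x - m) ⬝ᵥ D *ᵥ (x - m))
      = -(1/2) * ((x - m) ⬝ᵥ A⁻¹ *ᵥ (x - m)) + -(1/2) * ((x - m) ⬝ᵥ D *ᵥ (x - m)) by ring]
    rw [Real.exp_add]
    ring
  simp_rw [step3, MeasureTheory.integral_const_mul]
  have step4 : ∫ x : ι → ℝ, Real.exp (-(1/2) * ((x - m) ⬝ᵥ F *ᵥ (x - m)))
      = (2*π) ^ (n/2) * F.det ^ (-(1:ℝ)/2) := by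
    rw [integral_sub_right_eq_self (fun z : ι → ℝ => Real.exp (-(1/2) * (z ⬝ᵥ F *ᵥ z))) m]
    exact gauss_quad0 hF
  rw [step4]
  have hcancel : (2*π) ^ (-n/2) * (2*π) ^ (n/2) = 1 := by
    rw [← Real.rpow_add (by positivity), show -n/2 + n/2 = 0 by ring, Real.rpow_zero]
  have hmul : A.det ^ (-(1:ℝ)/2) * B.det ^ (-(1:ℝ)/2) * C.det ^ (-(1:ℝ)/2) * F.det ^ (-(1:ℝ)/2)
      = (A.det * B.det * C.det * F.det) ^ (-(1:ℝ)/2) := by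
    rw [Real.mul_rpow (mul_pos (mul_pos hAd hBd) hC.det_pos).le hF.det_pos.le,
      Real.mul_rpow (mul_pos hAd hBd).le hC.det_pos.le,
      Real.mul_rpow hAd.le hBd.le]
  calc (2*π) ^ (-n/2) * A.det ^ (-(1:ℝ)/2) * B.det ^ (-(1:ℝ)/2) * C.det ^ (-(1:ℝ)/2)
        * ((2*π) ^ (n/2) * F.det ^ (-(1:ℝ)/2))
      = ((2*π) ^ (-n/2) * (2*π) ^ (n/2)) * (A.det ^ (-(1:ℝ)/2) * B.det ^ (-(1:ℝ)/2)
          * C.det ^ (-(1:ℝ)/2) * F.det ^ (-(1:ℝ)/2)) := by ring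
    _ = (γ • A + γ • B + 1).det ^ (-(1:ℝ)/2) := by
        rw [hcancel, one_mul, hmul, hdetprod]

lemma blockdiag_posDef {M : ℕ} {dm : Fin M → ℕ}
    {S₁ S₂ : Matrix ((i : Fin M) × Fin (dm i)) ((i : Fin M) × Fin (dm i)) ℝ}
    (hS₁ : S₁.PosDef) (hS₂ : ∀ a b, S₂ a b = if a.1 = b.1 then S₁ a b else 0) :
    S₂.PosDef := by
  classical
  have hsym : ∀ a b, S₁ a b = S₁ b a := by
    intro a b
    have := congrFun (congrFun hS₁.1 a) b
    simpa [conjTranspose_apply, star_trivial] using this.symm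
  refine Matrix.PosDef.of_dotProduct_mulVec_pos ?_ ?_
  · ext a b
    rw [conjTranspose_apply, star_trivial, hS₂, hS₂]
    by_cases h : b.1 = a.1
    · rw [if_pos h, if_pos h.symm, hsym a b]
    · rw [if_neg h, if_neg (Ne.symm h)]
  · intro x hx
    set y : Fin M → ((i : Fin M) × Fin (dm i)) → ℝ :=
      fun i a => if a.1 = i then x a else 0 with hy
    have key : ∑ i : Fin M, (y i) ⬝ᵥ S₁ *ᵥ (y i) = x ⬝ᵥ S₂ *ᵥ x := by
      simp only [dotProduct, Matrix.mulVec, Finset.mul_sum]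
      rw [Finset.sum_comm]
      refine Finset.sum_congr rfl (fun a _ => ?_)
      rw [Finset.sum_comm]
      refine Finset.sum_congr rfl (fun b _ => ?_)
      rw [Finset.sum_eq_single a.1]
      · rw [hS₂]
        simp only [hy]
        by_cases h : a.1 = b.1
        · rw [if_pos trivial, if_pos h.symm, if_pos h]
        · rw [if_pos trivial, if_neg (fun hh : b.1 = a.1 => h hh.symm), if_neg h]
          ring
      · intro i _ hi
        simp [hy, Ne.symm hi]
      · simp
    have hnonneg : ∀ i : Fin M, 0 ≤ (y i) ⬝ᵥ S₁ *ᵥ (y i) := by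
      intro i
      have := hS₁.posSemidef.dotProduct_mulVec_nonneg (y i)
      simpa [star_trivial] using this
    obtain ⟨a, ha⟩ : ∃ a, x a ≠ 0 := Function.ne_iff.mp hx
    have hyne : y a.1 ≠ 0 := by
      intro h
      have := congrFun h a
      simp [hy] at this
      exact ha this
    have hpos : 0 < (y a.1) ⬝ᵥ S₁ *ᵥ (y a.1) := by
      have := hS₁.dotProduct_mulVec_pos hyne
      simpa [star_trivial] using this
    have : 0 < ∑ i : Fin M, (y i) ⬝ᵥ S₁ *ᵥ (y i) :=
      Finset.sum_pos' (fun i _ => hnonneg i) ⟨a.1, Finset.mem_univ _, hpos⟩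
    rw [key] at this
    simpa [star_trivial] using this

end Aux

set_option maxHeartbeats 1000000 in
/-- Lemma 1 of the paper (analytical value of HSIC for the Gaussian setting):
with `P = N(m, Σ₁)` a joint Gaussian over `M` blocks, `Σ₂` the block-diagonal of `Σ₁`
(so `N(m,Σ₂)` is the product of the marginals of `P`), and `k` the Gaussian kernel of
bandwidth `γ`, the squared HSIC
`HSIC_k²(P) = ∬k dP dP + ∬k dQ dQ - 2∬k dP dQ` equals
`det(2γΣ₁+I)^{-1/2} + det(2γΣ₂+I)^{-1/2} - 2 det(γΣ₁+γΣ₂+I)^{-1/2}`. -/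
theorem stmt_8 (M : ℕ) (dm : Fin M → ℕ) (γ : ℝ) (hγ : 0 < γ)
    (m : ((i : Fin M) × Fin (dm i)) → ℝ)
    (S₁ S₂ : Matrix ((i : Fin M) × Fin (dm i)) ((i : Fin M) × Fin (dm i)) ℝ)
    (hS₁ : S₁.PosDef) (hS₂ : ∀ a b, S₂ a b = if a.1 = b.1 then S₁ a b else 0)
    (P Q : Measure (((i : Fin M) × Fin (dm i)) → ℝ))
    (hP : P = gaussianMeasure m S₁) (hQ : Q = gaussianMeasure m S₂) :
    gaussKernelII γ P P + gaussKernelII γ Q Q - 2 * gaussKernelII γ P Q =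
      ((2 * γ) • S₁ + 1).det ^ (-(1 : ℝ) / 2) + ((2 * γ) • S₂ + 1).det ^ (-(1 : ℝ) / 2) -
        2 * (γ • S₁ + γ • S₂ + 1).det ^ (-(1 : ℝ) / 2) := by
  subst hP
  subst hQ
  have h2 : S₂.PosDef := blockdiag_posDef hS₁ hS₂
  rw [gaussKernelII_eq γ hγ m hS₁ hS₁, gaussKernelII_eq γ hγ m h2 h2,
    gaussKernelII_eq γ hγ m hS₁ h2,
    show ((2*γ) • S₁ : Matrix ((i : Fin M) × Fin (dm i)) ((i : Fin M) × Fin (dm i)) ℝ)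
      = γ • S₁ + γ • S₁ by rw [two_mul, add_smul],
    show ((2*γ) • S₂ : Matrix ((i : Fin M) × Fin (dm i)) ((i : Fin M) × Fin (dm i)) ℝ)
      = γ • S₂ + γ • S₂ by rw [two_mul, add_smul]]
end

section
/- Let γ > 0, z = 2γ+1, d ≥ 1, and c = γ²/(z²·z^{d/2}). For 0 < x < (1+1/(2γ))², define f_c(x) = [z^{d−2}(z²−4γ²x)]^{−1/2} + z^{−d/2} − 2[z^{d−2}(z²−γ²x)]^{−1/2} − c·x. Then f_c(x) ≥ 0 for all x in (0, min(1, (1+1/(2γ))²)]. -/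
lemma hS' (t : ℝ) (h0 : 0 ≤ t) (h1 : t ≤ 1/4) :
    0 ≤ 24 - 164*t + 517*t^2 - 80*t^3 - 169*t^4 + 104*t^5 - 16*t^6 := by
  nlinarith [sq_nonneg (517*t - 82), mul_nonneg h0 h0, mul_nonneg (mul_nonneg h0 h0) h0,
    mul_nonneg (mul_nonneg (mul_nonneg h0 h0) h0) h0, sq_nonneg t,
    mul_nonneg (mul_nonneg h0 h0) (sub_nonneg.2 h1),
    mul_nonneg (mul_nonneg (mul_nonneg h0 h0) (mul_nonneg h0 h0)) (sub_nonneg.2 h1)]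

lemma core' (t u v : ℝ) (ht0 : 0 < t) (ht : t < 1/4) (hu : 0 < u) (hv : 0 < v)
    (hu2 : u^2 = 1 - 4*t) (hv2 : v^2 = 1 - t) : 2*u ≤ v + u*v^3 := by
  have hP : 2 - 8*t - 15*t^2 + 13*t^3 - 4*t^4 ≤ 2*u*(1-t)^2 := by
    rcases le_or_gt (2 - 8*t - 15*t^2 + 13*t^3 - 4*t^4) 0 with h | h
    · have : 0 ≤ 2*u*(1-t)^2 := by positivity
      linarith
    · have hQ : (2 - 8*t - 15*t^2 + 13*t^3 - 4*t^4)^2 ≤ 4*(1-4*t)*(1-t)^4 := by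
        have := hS' t ht0.le ht.le
        nlinarith [mul_nonneg (mul_nonneg ht0.le ht0.le) this,
          mul_nonneg (mul_nonneg ht0.le ht0.le) h.le]
      have h2 : 0 < 2*u*(1-t)^2 := by
        have : (0:ℝ) < 1 - t := by linarith
        positivity
      have hA2 : (2*u*(1-t)^2)^2 = 4*(1-4*t)*(1-t)^4 := by
        rw [show (2*u*(1-t)^2)^2 = 4*u^2*(1-t)^4 by ring, hu2]
      nlinarith [hQ, hA2, h, h2]
  have h4 : v^4 = (1-t)^2 := by rw [show v^4 = (v^2)^2 by ring, hv2]
  have h6 : v^6 = (1-t)^3 := by rw [show v^6 = (v^2)^3 by ring, hv2]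
  have hA2 : (v + u*v^3)^2 = (1-t) + 2*u*(1-t)^2 + (1-4*t)*(1-t)^3 := by
    rw [show (v + u*v^3)^2 = v^2 + 2*u*v^4 + u^2*v^6 by ring, hu2, hv2, h4, h6]
  have hge : 4*u^2 ≤ (v + u*v^3)^2 := by rw [hA2, hu2]; nlinarith [hP]
  have hA : 0 < v + u*v^3 := by positivity
  nlinarith [hge, hA, hu]

/-- With `z = 2γ+1` and `c = γ²/(z² z^{d/2})`, the function
`f_c(x) = [z^{d-2}(z²-4γ²x)]^{-1/2} + z^{-d/2} - 2[z^{d-2}(z²-γ²x)]^{-1/2} - c x`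
is nonnegative on `(0, min(1, (1+1/(2γ))²)]`. -/
theorem stmt_9 (γ : ℝ) (hγ : 0 < γ) (d : ℕ) (hd : 1 ≤ d) (z c : ℝ)
    (hz : z = 2 * γ + 1) (hc : c = γ ^ 2 / (z ^ 2 * z ^ ((d : ℝ) / 2)))
    (x : ℝ) (hx0 : 0 < x) (hx1 : x ≤ min 1 ((1 + 1 / (2 * γ)) ^ 2)) :
    0 ≤ (z ^ ((d : ℝ) - 2) * (z ^ 2 - 4 * γ ^ 2 * x)) ^ (-(1 : ℝ) / 2) +
        z ^ (-(d : ℝ) / 2) -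
        2 * (z ^ ((d : ℝ) - 2) * (z ^ 2 - γ ^ 2 * x)) ^ (-(1 : ℝ) / 2) - c * x := by
  have hz0 : 0 < z := by rw [hz]; linarith
  have hx1' : x ≤ 1 := hx1.trans (min_le_left _ _)
  set t : ℝ := γ ^ 2 * x / z ^ 2 with hts
  have hz2 : (0:ℝ) < z ^ 2 := by positivity
  have ht0 : 0 < t := by positivity
  have ht : t < 1/4 := by
    rw [hts, div_lt_iff₀ hz2]
    nlinarith [hγ, hx0, hx1', sq_nonneg γ]
  have h14 : (0:ℝ) < 1 - 4*t := by linarith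
  have h1t : (0:ℝ) < 1 - t := by linarith
  -- rewrite the big rpow terms
  have hzd : z ^ ((d : ℝ) - 2) * z ^ (2:ℕ) = z ^ (d : ℝ) := by
    rw [← Real.rpow_natCast z 2, ← Real.rpow_add hz0]
    norm_num
  have e1 : z ^ ((d : ℝ) - 2) * (z ^ 2 - 4 * γ ^ 2 * x) = z ^ (d:ℝ) * (1 - 4*t) := by
    rw [← hzd, hts]
    field_simp
  have e2 : z ^ ((d : ℝ) - 2) * (z ^ 2 - γ ^ 2 * x) = z ^ (d:ℝ) * (1 - t) := by
    rw [← hzd, hts]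
    field_simp
  have hD : (z ^ (d:ℝ)) ^ (-(1:ℝ)/2) = z ^ (-(d:ℝ)/2) := by
    rw [← Real.rpow_mul hz0.le, show (d:ℝ)*(-(1:ℝ)/2) = -(d:ℝ)/2 by ring]
  have hzd0 : (0:ℝ) ≤ z ^ (d:ℝ) := (Real.rpow_pos_of_pos hz0 _).le
  have f1 : (z ^ ((d : ℝ) - 2) * (z ^ 2 - 4 * γ ^ 2 * x)) ^ (-(1:ℝ)/2)
      = z ^ (-(d:ℝ)/2) * (1 - 4*t) ^ (-(1:ℝ)/2) := by
    rw [e1, Real.mul_rpow hzd0 h14.le, hD]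
  have f2 : (z ^ ((d : ℝ) - 2) * (z ^ 2 - γ ^ 2 * x)) ^ (-(1:ℝ)/2)
      = z ^ (-(d:ℝ)/2) * (1 - t) ^ (-(1:ℝ)/2) := by
    rw [e2, Real.mul_rpow hzd0 h1t.le, hD]
  have hDpos : 0 < z ^ (-(d:ℝ)/2) := Real.rpow_pos_of_pos hz0 _
  have hcx : c * x = z ^ (-(d:ℝ)/2) * t := by
    rw [hc, hts, show -(d:ℝ)/2 = -((d:ℝ)/2) by ring, Real.rpow_neg hz0.le]
    have : (0:ℝ) < z ^ ((d:ℝ)/2) := Real.rpow_pos_of_pos hz0 _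
    field_simp
  rw [f1, f2, hcx]
  -- now reduce to the core inequality
  set u : ℝ := Real.sqrt (1 - 4*t) with hus
  set v : ℝ := Real.sqrt (1 - t) with hvs
  have hu : 0 < u := Real.sqrt_pos.2 h14
  have hv : 0 < v := Real.sqrt_pos.2 h1t
  have hu2 : u^2 = 1 - 4*t := Real.sq_sqrt h14.le
  have hv2 : v^2 = 1 - t := Real.sq_sqrt h1t.le
  have g1 : (1 - 4*t) ^ (-(1:ℝ)/2) = u⁻¹ := by
    rw [hus, Real.sqrt_eq_rpow, show -(1:ℝ)/2 = -(1/2) by ring, Real.rpow_neg h14.le]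
  have g2 : (1 - t) ^ (-(1:ℝ)/2) = v⁻¹ := by
    rw [hvs, Real.sqrt_eq_rpow, show -(1:ℝ)/2 = -(1/2) by ring, Real.rpow_neg h1t.le]
  rw [g1, g2]
  have hcore := core' t u v ht0 ht hu hv hu2 hv2
  have hkey : 0 ≤ u⁻¹ + 1 - 2*v⁻¹ - t := by
    have heq : u⁻¹ + 1 - 2*v⁻¹ - t = (v + u*v^3 - 2*u)/(u*v) := by
      rw [eq_div_iff (by positivity : (u*v) ≠ 0)]
      field_simp
      linear_combination (-(u*v)) * hv2
    rw [heq]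
    apply div_nonneg (by linarith) (by positivity)
  calc (0:ℝ) = z ^ (-(d:ℝ)/2) * 0 := by ring
    _ ≤ z ^ (-(d:ℝ)/2) * (u⁻¹ + 1 - 2*v⁻¹ - t) := by
        exact mul_le_mul_of_nonneg_left hkey hDpos.le
    _ = z ^ (-(d:ℝ)/2) * u⁻¹ + z ^ (-(d:ℝ)/2) - 2*(z ^ (-(d:ℝ)/2) * v⁻¹) - z ^ (-(d:ℝ)/2) * t := by
        ring
end

section
/- Let g(ρ) = [(z²−4γ²ρ²)]^{−1/2}·z^{−(d−2)/2} + z^{−d/2} − 2[(z²−γ²ρ²)]^{−1/2}·z^{−(d−2)/2}, where z = 2γ+1, γ > 0, d ≥ 2. Then g(0) = 0 and g(ρ) > 0 for 0 < ρ² < (1+1/(2γ))². -/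
private lemma inv_sqrt_eq (x : ℝ) (hx : 0 ≤ x) :
    x ^ (-(1 : ℝ) / 2) = (Real.sqrt x)⁻¹ := by
  rw [Real.sqrt_eq_rpow, ← Real.rpow_neg hx]
  norm_num

private lemma key_ineq (p q : ℝ) (hp : 0 < p) (hq : 0 < q) (hne : p ≠ q) :
    2 * ((p + q) / 2) ^ (-(1 : ℝ) / 2) < p ^ (-(1 : ℝ) / 2) + q ^ (-(1 : ℝ) / 2) := by
  have hm : 0 < (p + q) / 2 := by linarith
  rw [inv_sqrt_eq p hp.le, inv_sqrt_eq q hq.le, inv_sqrt_eq _ hm.le]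
  set sp := Real.sqrt p with hsp'
  set sq := Real.sqrt q with hsq'
  set sm := Real.sqrt ((p + q) / 2) with hsm'
  have hsp : 0 < sp := Real.sqrt_pos.mpr hp
  have hsq : 0 < sq := Real.sqrt_pos.mpr hq
  have hsm : 0 < sm := Real.sqrt_pos.mpr hm
  have hp2 : sp ^ 2 = p := Real.sq_sqrt hp.le
  have hq2 : sq ^ 2 = q := Real.sq_sqrt hq.le
  have hm2 : sm ^ 2 = (p + q) / 2 := Real.sq_sqrt hm.le
  have hspq : sp ≠ sq := by
    intro h; apply hne; rw [← hp2, ← hq2, h]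
  have hpos : 0 < (sp - sq) ^ 2 := by
    have := sub_ne_zero.mpr hspq
    positivity
  have hkey : 2 * (sp * sq) < (sp + sq) * sm := by
    nlinarith [mul_pos hsp hsq, mul_pos (add_pos hsp hsq) hsm, sq_nonneg (sp + sq),
      mul_pos (mul_pos hsp hsq) hsm, sq_nonneg (sp - sq)]
  have h1 : 2 * sm⁻¹ = 2 / sm := by ring
  have h2 : sp⁻¹ + sq⁻¹ = (sp + sq) / (sp * sq) := by
    field_simp; ring
  rw [h1, h2, div_lt_div_iff₀ hsm (mul_pos hsp hsq)]
  linarith [hkey]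

private lemma anti_ineq (a b : ℝ) (ha : 0 < a) (hab : a < b) :
    b ^ (-(1 : ℝ) / 2) < a ^ (-(1 : ℝ) / 2) := by
  have hb : 0 < b := lt_trans ha hab
  rw [inv_sqrt_eq a ha.le, inv_sqrt_eq b hb.le]
  exact inv_strictAnti₀ (Real.sqrt_pos.mpr ha) (Real.sqrt_lt_sqrt ha.le hab)

/-- With `z = 2γ+1`, the function
`g(ρ) = (z²-4γ²ρ²)^{-1/2} z^{-(d-2)/2} + z^{-d/2} - 2(z²-γ²ρ²)^{-1/2} z^{-(d-2)/2}`
satisfies `g(0) = 0` and `g(ρ) > 0` for `0 < ρ² < (1+1/(2γ))²`. -/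
theorem stmt_11 (γ : ℝ) (hγ : 0 < γ) (d : ℕ) (hd : 2 ≤ d) (z : ℝ) (hz : z = 2 * γ + 1)
    (g : ℝ → ℝ)
    (hg : ∀ ρ : ℝ, g ρ =
      (z ^ 2 - 4 * γ ^ 2 * ρ ^ 2) ^ (-(1 : ℝ) / 2) * z ^ (-((d : ℝ) - 2) / 2) +
        z ^ (-(d : ℝ) / 2) -
        2 * (z ^ 2 - γ ^ 2 * ρ ^ 2) ^ (-(1 : ℝ) / 2) * z ^ (-((d : ℝ) - 2) / 2)) :
    g 0 = 0 ∧ ∀ ρ : ℝ, 0 < ρ ^ 2 → ρ ^ 2 < (1 + 1 / (2 * γ)) ^ 2 → 0 < g ρ := by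
  have hzpos : 0 < z := by rw [hz]; linarith
  -- (z^2)^(-1/2) = z⁻¹
  have hzsq : (z ^ 2) ^ (-(1 : ℝ) / 2) = z⁻¹ := by
    rw [inv_sqrt_eq _ (sq_nonneg z), Real.sqrt_sq hzpos.le]
  -- z^(-d/2) = z⁻¹ * z^(-(d-2)/2)
  have hzd : z ^ (-(d : ℝ) / 2) = z⁻¹ * z ^ (-((d : ℝ) - 2) / 2) := by
    rw [← Real.rpow_neg_one z, ← Real.rpow_add hzpos]
    congr 1
    ring
  have hW : 0 < z ^ (-((d : ℝ) - 2) / 2) := Real.rpow_pos_of_pos hzpos _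
  constructor
  · have e1 : z ^ 2 - 4 * γ ^ 2 * (0:ℝ) ^ 2 = z ^ 2 := by ring
    have e2 : z ^ 2 - γ ^ 2 * (0:ℝ) ^ 2 = z ^ 2 := by ring
    rw [hg 0, e1, e2, hzsq, hzd]
    ring
  · intro ρ hρ1 hρ2
    have ha : 0 < γ ^ 2 * ρ ^ 2 := mul_pos (pow_pos hγ 2) hρ1
    have h4a : 4 * (γ ^ 2 * ρ ^ 2) < z ^ 2 := by
      have h1 : (1 + 1 / (2 * γ)) = z / (2 * γ) := by
        rw [hz]; field_simp
      rw [h1, div_pow] at hρ2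
      have h2γ : 0 < (2 * γ) ^ 2 := by positivity
      rw [lt_div_iff₀ h2γ] at hρ2
      nlinarith
    set a := γ ^ 2 * ρ ^ 2 with ha'
    have hA : 0 < z ^ 2 - 4 * a := by linarith
    have hB : 0 < z ^ 2 - a := by linarith
    -- key inequality with p = z²-4a, q = z²
    have hne : z ^ 2 - 4 * a ≠ z ^ 2 := by linarith
    have hk := key_ineq (z ^ 2 - 4 * a) (z ^ 2) hA (by positivity) hne
    have hmid : ((z ^ 2 - 4 * a) + z ^ 2) / 2 = z ^ 2 - 2 * a := by ring
    rw [hmid, hzsq] at hk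
    have hanti : (z ^ 2 - a) ^ (-(1 : ℝ) / 2) < (z ^ 2 - 2 * a) ^ (-(1 : ℝ) / 2) :=
      anti_ineq _ _ (by linarith) (by linarith)
    have hmain : 2 * (z ^ 2 - a) ^ (-(1 : ℝ) / 2) < (z ^ 2 - 4 * a) ^ (-(1 : ℝ) / 2) + z⁻¹ := by
      linarith
    rw [hg ρ, hzd]
    have : 0 < ((z ^ 2 - 4 * a) ^ (-(1 : ℝ) / 2) + z⁻¹ - 2 * (z ^ 2 - a) ^ (-(1 : ℝ) / 2)) *
        z ^ (-((d : ℝ) - 2) / 2) := mul_pos (by linarith) hW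
    have heq : (z ^ 2 - 4 * γ ^ 2 * ρ ^ 2) = z ^ 2 - 4 * a := by rw [ha']; ring
    rw [heq]
    nlinarith [this]
end
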